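/- arXiv:2401.08466 — 2 statements merged into one kernel-verified Lean document; each statement's English description precedes it below -/
import Mathlib

section
/- Let H be a finite bipartite graph on vertex set L ⊔ R, and let L* ⊆ L and R* ⊆ R. Then there exists a partial matching on H covering both L* and R* if and only if for every subset A ⊆ L* and every subset A ⊆ R*, we have |μ(A)| ≥ |A|, where μ(A) is the set of vertices adjacent to at least one vertex of A. -/
/-! Necessity: a matching covering `A` injects `A` into `μ(A)`. Sufficiency: Hall's theorem gives
a matching `M₁` covering `L*` and a matching `M₂` covering `R*`, which are merged as in the
Schröder–Bernstein argument (Mendelsohn–Dulmage). Let `S` be the right vertices reachable from an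
`M₁`-unmatched right vertex by repeatedly following an `M₂`-edge and then an `M₁`-edge; keep the
`M₂`-edges at `S` and the `M₁`-edges at the left vertices not `M₂`-matched into `S`. -/

open scoped Classical

open Finset Relator

section Matchings

variable {L R : Type*}

section MendelsohnDulmage

variable (M₁ M₂ : L → R → Prop)

inductive AltReachable : R → Prop
  | unmatched {r : R} : (∀ l, ¬ M₁ l r) → AltReachable r
  | step {l : L} {r r' : R} : AltReachable r → M₂ l r → M₁ l r' → AltReachable r'

def mendelsohnDulmage (l : L) (r : R) : Prop :=
  (M₂ l r ∧ AltReachable M₁ M₂ r) ∨ (M₁ l r ∧ ∀ r', AltReachable M₁ M₂ r' → ¬ M₂ l r')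

variable {M₁ M₂}

theorem AltReachable.exists_prev (h₁ : LeftUnique M₁) {l : L} {r : R}
    (hr : AltReachable M₁ M₂ r) (hl : M₁ l r) : ∃ r₀, AltReachable M₁ M₂ r₀ ∧ M₂ l r₀ := by
  cases hr with
  | unmatched h => exact absurd hl (h l)
  | step hr₀ h₂ h₁' => exact ⟨_, hr₀, h₁ h₁' hl ▸ h₂⟩

theorem mendelsohnDulmage_le : mendelsohnDulmage M₁ M₂ ≤ M₁ ⊔ M₂ := by
  rintro l r (⟨h, -⟩ | ⟨h, -⟩)
  exacts [Or.inr h, Or.inl h]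

theorem biUnique_mendelsohnDulmage (h₁ : BiUnique M₁) (h₂ : BiUnique M₂) :
    BiUnique (mendelsohnDulmage M₁ M₂) := by
  constructor
  · rintro l l' r (⟨hM₂, hr⟩ | ⟨hM₁, hfree⟩) (⟨hM₂', hr'⟩ | ⟨hM₁', hfree'⟩)
    · exact h₂.1 hM₂ hM₂'
    · obtain ⟨r₀, hr₀, h⟩ := hr.exists_prev h₁.1 hM₁'
      exact absurd h (hfree' r₀ hr₀)
    · obtain ⟨r₀, hr₀, h⟩ := hr'.exists_prev h₁.1 hM₁
      exact absurd h (hfree r₀ hr₀)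
    · exact h₁.1 hM₁ hM₁'
  · rintro l r r' (⟨hM₂, hr⟩ | ⟨hM₁, hfree⟩) (⟨hM₂', hr'⟩ | ⟨hM₁', hfree'⟩)
    · exact h₂.2 hM₂ hM₂'
    · exact absurd hM₂ (hfree' r hr)
    · exact absurd hM₂' (hfree r' hr')
    · exact h₁.2 hM₁ hM₁'

theorem exists_mendelsohnDulmage_of_left {l : L} {r : R} (h : M₁ l r) :
    ∃ r', mendelsohnDulmage M₁ M₂ l r' := by
  by_cases hl : ∃ r', AltReachable M₁ M₂ r' ∧ M₂ l r'
  · obtain ⟨r', hr', hl⟩ := hl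
    exact ⟨r', Or.inl ⟨hl, hr'⟩⟩
  · exact ⟨r, Or.inr ⟨h, fun r' hr' hl' => hl ⟨r', hr', hl'⟩⟩⟩

theorem exists_mendelsohnDulmage_of_right {l : L} {r : R} (h : M₂ l r) :
    ∃ l', mendelsohnDulmage M₁ M₂ l' r := by
  by_cases hr : AltReachable M₁ M₂ r
  · exact ⟨l, Or.inl ⟨h, hr⟩⟩
  · obtain ⟨l', hl'⟩ : ∃ l', M₁ l' r := by
      by_contra! h'
      exact hr (.unmatched h')
    exact ⟨l', Or.inr ⟨hl', fun r₀ hr₀ h₀ => hr (hr₀.step h₀ hl')⟩⟩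

end MendelsohnDulmage

theorem exists_biUnique_covering_both_iff (E : L → R → Prop) (S : Set L) (T : Set R) :
    (∃ M : L → R → Prop, BiUnique M ∧ M ≤ E ∧ (∀ l ∈ S, ∃ r, M l r) ∧ ∀ r ∈ T, ∃ l, M l r) ↔
      (∃ M : L → R → Prop, BiUnique M ∧ M ≤ E ∧ ∀ l ∈ S, ∃ r, M l r) ∧
        ∃ M : L → R → Prop, BiUnique M ∧ M ≤ E ∧ ∀ r ∈ T, ∃ l, M l r := by
  refine ⟨fun ⟨M, hM, hME, hS, hT⟩ => ⟨⟨M, hM, hME, hS⟩, ⟨M, hM, hME, hT⟩⟩, ?_⟩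
  rintro ⟨⟨M₁, hM₁, hM₁E, hS⟩, ⟨M₂, hM₂, hM₂E, hT⟩⟩
  refine ⟨mendelsohnDulmage M₁ M₂, biUnique_mendelsohnDulmage hM₁ hM₂,
    mendelsohnDulmage_le.trans (sup_le hM₁E hM₂E), fun l hl => ?_, fun r hr => ?_⟩
  · obtain ⟨r, hr⟩ := hS l hl
    exact exists_mendelsohnDulmage_of_left hr
  · obtain ⟨l, hl⟩ := hT r hr
    exact exists_mendelsohnDulmage_of_right hl

theorem exists_biUnique_covering_iff_exists_injective (E : L → R → Prop) (S : Set L) :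
    (∃ M : L → R → Prop, BiUnique M ∧ M ≤ E ∧ ∀ l ∈ S, ∃ r, M l r) ↔
      ∃ f : S → R, Function.Injective f ∧ ∀ l : S, E l (f l) := by
  constructor
  · rintro ⟨M, hM, hME, hS⟩
    choose f hf using fun l : S => hS l l.2
    exact ⟨f, fun l l' h => Subtype.ext (hM.1 (hf l) (h ▸ hf l')), fun l => hME _ _ (hf l)⟩
  · rintro ⟨f, hf, hfE⟩
    refine ⟨fun l r => ∃ hl : l ∈ S, f ⟨l, hl⟩ = r, ⟨?_, ?_⟩, ?_, fun l hl => ⟨_, hl, rfl⟩⟩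
    · rintro l l' r ⟨_, rfl⟩ ⟨_, h⟩
      exact congrArg Subtype.val (hf h).symm
    · rintro l r r' ⟨_, rfl⟩ ⟨_, rfl⟩
      rfl
    · rintro l r ⟨hl, rfl⟩
      exact hfE ⟨l, hl⟩

theorem hall_iff_exists_injective [Fintype R] (E : L → R → Prop) (S : Finset L) :
    (∀ A ⊆ S, #A ≤ #{r | ∃ l ∈ A, E l r}) ↔
      ∃ f : S → R, Function.Injective f ∧ ∀ l : S, E l (f l) := by
  rw [← Fintype.all_card_le_filter_rel_iff_exists_injective]
  constructor
  · intro h B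
    have hB : B.map (.subtype _) ⊆ S := fun l hl => by
      obtain ⟨l, -, rfl⟩ := mem_map.1 hl
      exact l.2
    simpa using h _ hB
  · intro h A hA
    have := h (A.subtype (· ∈ S))
    rw [card_subtype, filter_true_of_mem hA] at this
    convert this using 3
    simp only [mem_subtype, Subtype.exists]
    exact exists_congr fun l => ⟨fun ⟨hl, h⟩ => ⟨hA hl, hl, h⟩, fun ⟨_, hl, h⟩ => ⟨hl, h⟩⟩

theorem exists_biUnique_covering_iff_hall [Fintype R] (E : L → R → Prop) (S : Finset L) :
    (∃ M : L → R → Prop, BiUnique M ∧ M ≤ E ∧ ∀ l ∈ S, ∃ r, M l r) ↔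
      ∀ A ⊆ S, #A ≤ #{r | ∃ l ∈ A, E l r} :=
  (exists_biUnique_covering_iff_exists_injective E S).trans (hall_iff_exists_injective E S).symm

theorem Relator.BiUnique.flip {M : L → R → Prop} (h : BiUnique M) : BiUnique (flip M) :=
  ⟨fun _ _ _ h₁ h₂ => h.2 h₁ h₂, fun _ _ _ h₁ h₂ => h.1 h₁ h₂⟩

theorem exists_biUnique_covering_flip_iff (E : L → R → Prop) (T : Set R) :
    (∃ M : R → L → Prop, BiUnique M ∧ M ≤ flip E ∧ ∀ r ∈ T, ∃ l, M r l) ↔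
      ∃ M : L → R → Prop, BiUnique M ∧ M ≤ E ∧ ∀ r ∈ T, ∃ l, M l r :=
  ⟨fun ⟨M, hM, hME, hT⟩ => ⟨flip M, hM.flip, fun l r => hME r l, hT⟩,
    fun ⟨M, hM, hME, hT⟩ => ⟨flip M, hM.flip, fun r l => hME l r, hT⟩⟩

theorem biUnique_mem_iff (M : Finset (L × R)) :
    BiUnique (fun l r => (l, r) ∈ M) ↔ ∀ p ∈ M, ∀ q ∈ M, p ≠ q → p.1 ≠ q.1 ∧ p.2 ≠ q.2 := by
  constructor
  · rintro ⟨hl, hr⟩ ⟨l, r⟩ hp ⟨l', r'⟩ hq hne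
    refine ⟨fun h => hne ?_, fun h => hne ?_⟩
    · obtain rfl : l = l' := h
      rw [hr hp hq]
    · obtain rfl : r = r' := h
      rw [hl hp hq]
  · intro h
    refine ⟨fun l l' r hp hq => ?_, fun l r r' hp hq => ?_⟩
    · by_contra hne
      exact (h _ hp _ hq (by simpa using hne)).2 rfl
    · by_contra hne
      exact (h _ hp _ hq (by simpa using hne)).1 rfl

theorem exists_finset_iff_exists_rel [Fintype L] [Fintype R] (P : (L → R → Prop) → Prop) :
    (∃ M : Finset (L × R), P fun l r => (l, r) ∈ M) ↔ ∃ M : L → R → Prop, P M := by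
  refine ⟨fun ⟨M, hM⟩ => ⟨_, hM⟩, fun ⟨M, hM⟩ => ⟨univ.filter fun p : L × R => M p.1 p.2, ?_⟩⟩
  simpa using hM

end Matchings

/-- Hall's theorem for two-sided covers: in a finite bipartite graph on `L ⊔ R` with edge
relation `E`, and subsets `L* ⊆ L`, `R* ⊆ R`, there exists a partial matching covering both
`L*` and `R*` iff every subset `A` of `L*` or of `R*` satisfies `|μ(A)| ≥ |A|`. -/
theorem stmt4 {L R : Type*} [Fintype L] [Fintype R] (E : L → R → Prop)
    (Lstar : Finset L) (Rstar : Finset R) :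
    (∃ M : Finset (L × R),
        (∀ p ∈ M, E p.1 p.2) ∧
        (∀ p ∈ M, ∀ q ∈ M, p ≠ q → p.1 ≠ q.1 ∧ p.2 ≠ q.2) ∧
        (∀ l ∈ Lstar, ∃ r, (l, r) ∈ M) ∧
        (∀ r ∈ Rstar, ∃ l, (l, r) ∈ M)) ↔
      ((∀ A ⊆ Lstar, A.card ≤ (Finset.univ.filter fun r => ∃ l ∈ A, E l r).card) ∧
       (∀ A ⊆ Rstar, A.card ≤ (Finset.univ.filter fun l => ∃ r ∈ A, E l r).card)) := by
  calc _ ↔ ∃ M : L → R → Prop, BiUnique M ∧ M ≤ E ∧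
          (∀ l ∈ Lstar, ∃ r, M l r) ∧ ∀ r ∈ Rstar, ∃ l, M l r := by
        rw [← exists_finset_iff_exists_rel]
        refine exists_congr fun M => ?_
        rw [biUnique_mem_iff]
        simp only [Pi.le_def, Prod.forall]
        tauto
    _ ↔ (∃ M : L → R → Prop, BiUnique M ∧ M ≤ E ∧ ∀ l ∈ Lstar, ∃ r, M l r) ∧
          ∃ M : L → R → Prop, BiUnique M ∧ M ≤ E ∧ ∀ r ∈ Rstar, ∃ l, M l r :=
        exists_biUnique_covering_both_iff E Lstar Rstar
    _ ↔ _ := and_congr (exists_biUnique_covering_iff_hall E Lstar)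
        ((exists_biUnique_covering_flip_iff E Rstar).symm.trans
          (exists_biUnique_covering_iff_hall (flip E) Rstar))
end

section
/- If a set S carries an extended pseudometric c and a function W: S → [0,∞] compatible with c (i.e. |W(s₁) − W(s₂)| ≤ c(s₁,s₂) for all s₁,s₂), then the bottleneck distance d_B is an extended pseudometric on the set of finite multisets on S. -/
/-!
Symmetry and vanishing on the diagonal come from reversing a matching and from the diagonal
matching. For the triangle inequality, compose a matching `M₁` of `A` with `B` and a matching `M₂`
of `B` with `C` by chaining pairs through common elements of `B`, as long as possible. An element
`a` of `A` left unmatched by the composite is either unmatched by `M₁`, or matched by `M₁` to some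
`b` that, by maximality of the chaining, is unmatched by `M₂`; then
`W a ≤ W b + c a b ≤ cost M₂ + cost M₁`, and symmetrically on the side of `C`.
-/

open scoped Classical ENNReal

noncomputable section

/-- The cost of a matching `M` between multisets `A` and `B` on `S`: the supremum of the
costs `c` of matched pairs and of the weights `W` of unmatched elements. -/
def matchingCost {S : Type*} (c : S → S → ℝ≥0∞) (W : S → ℝ≥0∞)
    (A B : Multiset S) (M : Multiset (S × S)) : ℝ≥0∞ :=
  (M.map fun p => c p.1 p.2).sup ⊔
    (((A - M.map Prod.fst) + (B - M.map Prod.snd)).map W).sup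

/-- The bottleneck distance between (finite) multisets on `S`. -/
def bottleneck {S : Type*} (c : S → S → ℝ≥0∞) (W : S → ℝ≥0∞) (A B : Multiset S) : ℝ≥0∞ :=
  sInf {e | ∃ M : Multiset (S × S), M.map Prod.fst ≤ A ∧ M.map Prod.snd ≤ B ∧
    matchingCost c W A B M = e}

namespace Multiset

variable {α β γ : Type*}

theorem mem_sub_add_or_mem {a : α} {s t u : Multiset α} (h : a ∈ s - t) :
    a ∈ s - (t + u) ∨ a ∈ u := by
  rw [mem_sub] at h ⊢
  rw [← count_pos, count_add]
  omega

theorem mem_sub_add_of_mem_of_notMem {a : α} {s t u v : Multiset α} (hu : a ∈ u) (hv : a ∉ v)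
    (h : t + u ≤ s) : a ∈ s - (t + v) := by
  have hle := count_le_of_le a h
  rw [count_add] at hle
  rw [mem_sub, count_add, count_eq_zero_of_notMem hv]
  have := count_pos.2 hu
  omega

/-- `N` chains pairs of `M₁` with pairs of `M₂`; the disjointness says no leftover pair of `M₁`
can be chained with a leftover pair of `M₂`. -/
theorem exists_maximal_composition (M₁ : Multiset (α × β)) (M₂ : Multiset (β × γ)) :
    ∃ (N : Multiset (α × β × γ)) (L₁ : Multiset (α × β)) (L₂ : Multiset (β × γ)),
      M₁ = N.map (fun t => (t.1, t.2.1)) + L₁ ∧ M₂ = N.map Prod.snd + L₂ ∧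
      Disjoint (L₁.map Prod.snd) (L₂.map Prod.fst) := by
  induction M₁ using Multiset.induction_on generalizing M₂ with
  | empty => exact ⟨0, 0, M₂, by simp, by simp, by simp⟩
  | cons p M₁ ih =>
    by_cases hp : ∃ g, (p.2, g) ∈ M₂
    · obtain ⟨g, hg⟩ := hp
      obtain ⟨N, L₁, L₂, h₁, h₂, hdisj⟩ := ih (M₂.erase (p.2, g))
      refine ⟨(p.1, p.2, g) ::ₘ N, L₁, L₂, by simp [h₁], ?_, hdisj⟩
      rw [← cons_erase hg, h₂, map_cons, cons_add]
    · obtain ⟨N, L₁, L₂, h₁, h₂, hdisj⟩ := ih M₂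
      refine ⟨N, p ::ₘ L₁, L₂, by rw [h₁, add_cons], h₂, ?_⟩
      rw [map_cons, disjoint_cons_left]
      refine ⟨fun hmem => hp ?_, hdisj⟩
      obtain ⟨q, hq, hq₁⟩ := mem_map.1 hmem
      exact ⟨q.2, by rw [← hq₁]; exact mem_of_le (h₂ ▸ le_add_self) hq⟩

end Multiset

section Bottleneck

variable {S : Type*} {c : S → S → ℝ≥0∞} {W : S → ℝ≥0∞} {A B C : Multiset S}
  {M M₁ M₂ : Multiset (S × S)}

theorem matchingCost_le_iff {e : ℝ≥0∞} :
    matchingCost c W A B M ≤ e ↔ (∀ p ∈ M, c p.1 p.2 ≤ e) ∧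
      (∀ a ∈ A - M.map Prod.fst, W a ≤ e) ∧ (∀ b ∈ B - M.map Prod.snd, W b ≤ e) := by
  simp only [matchingCost, sup_le_iff, Multiset.sup_le, Multiset.forall_mem_map_iff,
    Multiset.mem_add, or_imp, forall_and]

theorem cost_le_matchingCost {p : S × S} (hp : p ∈ M) : c p.1 p.2 ≤ matchingCost c W A B M :=
  (matchingCost_le_iff.1 le_rfl).1 p hp

theorem weight_le_matchingCost_left {a : S} (ha : a ∈ A - M.map Prod.fst) :
    W a ≤ matchingCost c W A B M :=
  (matchingCost_le_iff.1 le_rfl).2.1 a ha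

theorem weight_le_matchingCost_right {b : S} (hb : b ∈ B - M.map Prod.snd) :
    W b ≤ matchingCost c W A B M :=
  (matchingCost_le_iff.1 le_rfl).2.2 b hb

theorem bottleneck_eq_iInf : bottleneck c W A B =
    ⨅ (M : Multiset (S × S)) (_ : M.map Prod.fst ≤ A ∧ M.map Prod.snd ≤ B),
      matchingCost c W A B M := by
  refine (congrArg sInf ?_).trans (sInf_image (s := {M | _ ∧ _}) (f := matchingCost c W A B))
  ext e
  simp [and_assoc]

theorem bottleneck_le_matchingCost (hA : M.map Prod.fst ≤ A) (hB : M.map Prod.snd ≤ B) :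
    bottleneck c W A B ≤ matchingCost c W A B M :=
  sInf_le ⟨M, hA, hB, rfl⟩

theorem matchingCost_diagonal (hrefl : ∀ s, c s s = 0) :
    matchingCost c W A A (A.map fun a => (a, a)) = 0 := by
  refine le_antisymm (matchingCost_le_iff.2 ⟨?_, ?_, ?_⟩) bot_le <;>
    simp [Multiset.map_map, hrefl]

theorem matchingCost_map_swap (hsymm : ∀ s₁ s₂, c s₁ s₂ = c s₂ s₁) :
    matchingCost c W B A (M.map Prod.swap) = matchingCost c W A B M := by
  simp only [matchingCost, Multiset.map_map, Function.comp_def, Prod.fst_swap, Prod.snd_swap,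
    hsymm _ (Prod.fst _), add_comm (B - _)]

theorem bottleneck_self (hrefl : ∀ s, c s s = 0) : bottleneck c W A A = 0 :=
  le_antisymm ((bottleneck_le_matchingCost (by simp [Multiset.map_map])
    (by simp [Multiset.map_map])).trans_eq (matchingCost_diagonal hrefl)) bot_le

theorem bottleneck_le_bottleneck_swap (hsymm : ∀ s₁ s₂, c s₁ s₂ = c s₂ s₁) :
    bottleneck c W A B ≤ bottleneck c W B A := by
  rw [bottleneck_eq_iInf (A := B)]
  refine le_iInf₂ fun M ⟨hB, hA⟩ => ?_
  refine (bottleneck_le_matchingCost ?_ ?_).trans_eq (matchingCost_map_swap hsymm) <;>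
    simpa [Multiset.map_map]

theorem bottleneck_comm (hsymm : ∀ s₁ s₂, c s₁ s₂ = c s₂ s₁) :
    bottleneck c W A B = bottleneck c W B A :=
  le_antisymm (bottleneck_le_bottleneck_swap hsymm) (bottleneck_le_bottleneck_swap hsymm)

theorem matchingCost_composition_le (hsymm : ∀ s₁ s₂, c s₁ s₂ = c s₂ s₁)
    (htri : ∀ s₁ s₂ s₃, c s₁ s₃ ≤ c s₁ s₂ + c s₂ s₃)
    (hcompat : ∀ s₁ s₂, W s₁ ≤ W s₂ + c s₁ s₂)
    {N : Multiset (S × S × S)} {L₁ L₂ : Multiset (S × S)}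
    (hM₁ : M₁ = N.map (fun t => (t.1, t.2.1)) + L₁) (hM₂ : M₂ = N.map Prod.snd + L₂)
    (hdisj : Disjoint (L₁.map Prod.snd) (L₂.map Prod.fst))
    (hB₁ : M₁.map Prod.snd ≤ B) (hB₂ : M₂.map Prod.fst ≤ B) :
    matchingCost c W A C (N.map fun t => (t.1, t.2.2)) ≤
      matchingCost c W A B M₁ + matchingCost c W B C M₂ := by
  have hM₁fst : M₁.map Prod.fst = N.map (·.1) + L₁.map Prod.fst := by
    simp [hM₁, Multiset.map_map]
  have hM₁snd : M₁.map Prod.snd = N.map (·.2.1) + L₁.map Prod.snd := by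
    simp [hM₁, Multiset.map_map]
  have hM₂fst : M₂.map Prod.fst = N.map (·.2.1) + L₂.map Prod.fst := by
    simp [hM₂, Multiset.map_map]
  have hM₂snd : M₂.map Prod.snd = N.map (·.2.2) + L₂.map Prod.snd := by
    simp [hM₂, Multiset.map_map]
  simp only [matchingCost_le_iff, Multiset.map_map, Function.comp_def, Multiset.forall_mem_map_iff]
  refine ⟨fun t ht => ?_, fun a ha => ?_, fun g hg => ?_⟩
  · calc c t.1 t.2.2 ≤ c t.1 t.2.1 + c t.2.1 t.2.2 := htri _ _ _
      _ ≤ _ := add_le_add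
          (cost_le_matchingCost (hM₁ ▸ Multiset.mem_add.2 (.inl (Multiset.mem_map_of_mem _ ht))))
          (cost_le_matchingCost (hM₂ ▸ Multiset.mem_add.2 (.inl (Multiset.mem_map_of_mem _ ht))))
  · rcases Multiset.mem_sub_add_or_mem (u := L₁.map Prod.fst) ha with ha | ha
    · rw [← hM₁fst] at ha
      exact (weight_le_matchingCost_left ha).trans le_self_add
    obtain ⟨p, hp, rfl⟩ := Multiset.mem_map.1 ha
    have hp₂ : p.2 ∈ B - M₂.map Prod.fst := hM₂fst ▸ Multiset.mem_sub_add_of_mem_of_notMem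
      (Multiset.mem_map_of_mem _ hp)
      (Multiset.disjoint_left.1 hdisj (Multiset.mem_map_of_mem _ hp)) (hM₁snd ▸ hB₁)
    calc W p.1 ≤ W p.2 + c p.1 p.2 := hcompat _ _
      _ ≤ _ := add_le_add (weight_le_matchingCost_left hp₂)
          (cost_le_matchingCost (hM₁ ▸ Multiset.mem_add.2 (.inr hp)))
      _ = _ := add_comm _ _
  · rcases Multiset.mem_sub_add_or_mem (u := L₂.map Prod.snd) hg with hg | hg
    · rw [← hM₂snd] at hg
      exact (weight_le_matchingCost_right hg).trans le_add_self
    obtain ⟨p, hp, rfl⟩ := Multiset.mem_map.1 hg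
    have hp₁ : p.1 ∈ B - M₁.map Prod.snd := hM₁snd ▸ Multiset.mem_sub_add_of_mem_of_notMem
      (Multiset.mem_map_of_mem _ hp)
      (Multiset.disjoint_right.1 hdisj (Multiset.mem_map_of_mem _ hp)) (hM₂fst ▸ hB₂)
    calc W p.2 ≤ W p.1 + c p.1 p.2 := hsymm p.1 p.2 ▸ hcompat _ _
      _ ≤ _ := add_le_add (weight_le_matchingCost_right hp₁)
          (cost_le_matchingCost (hM₂ ▸ Multiset.mem_add.2 (.inr hp)))

theorem bottleneck_triangle (hsymm : ∀ s₁ s₂, c s₁ s₂ = c s₂ s₁)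
    (htri : ∀ s₁ s₂ s₃, c s₁ s₃ ≤ c s₁ s₂ + c s₂ s₃)
    (hcompat : ∀ s₁ s₂, W s₁ ≤ W s₂ + c s₁ s₂) :
    bottleneck c W A C ≤ bottleneck c W A B + bottleneck c W B C := by
  rw [bottleneck_eq_iInf (A := A) (B := B), bottleneck_eq_iInf (A := B) (B := C)]
  refine ENNReal.le_iInf₂_add_iInf₂ fun M₁ ⟨hA₁, hB₁⟩ M₂ ⟨hB₂, hC₂⟩ => ?_
  obtain ⟨N, L₁, L₂, hM₁, hM₂, hdisj⟩ := Multiset.exists_maximal_composition M₁ M₂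
  refine (bottleneck_le_matchingCost ?_ ?_).trans
    (matchingCost_composition_le hsymm htri hcompat hM₁ hM₂ hdisj hB₁ hB₂)
  · refine le_trans ?_ hA₁
    simp [hM₁, Multiset.map_map]
  · refine le_trans ?_ hC₂
    simp [hM₂, Multiset.map_map]

end Bottleneck

/-- If `c` is an extended pseudometric on `S` and `W : S → [0,∞]` is compatible with `c`,
then the bottleneck distance is an extended pseudometric on the multisets on `S`. -/
theorem stmt7 {S : Type*} (c : S → S → ℝ≥0∞) (W : S → ℝ≥0∞)
    (hrefl : ∀ s, c s s = 0) (hsymm : ∀ s₁ s₂, c s₁ s₂ = c s₂ s₁)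
    (htri : ∀ s₁ s₂ s₃, c s₁ s₃ ≤ c s₁ s₂ + c s₂ s₃)
    (hcompat : ∀ s₁ s₂, W s₁ ≤ W s₂ + c s₁ s₂) :
    (∀ A, bottleneck c W A A = 0) ∧
    (∀ A B, bottleneck c W A B = bottleneck c W B A) ∧
    (∀ A B C', bottleneck c W A C' ≤ bottleneck c W A B + bottleneck c W B C') :=
  ⟨fun _ => bottleneck_self hrefl, fun _ _ => bottleneck_comm hsymm,
    fun _ _ _ => bottleneck_triangle hsymm htri hcompat⟩

end
end
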